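/- arXiv:2412.04890 — 3 statements merged into one kernel-verified Lean document; each statement's English description precedes it below -/
import Mathlib

section
/- Along any solution of the conformal geodesic equation ∇_u a = −(1/2)|a|² u + P♯u in arc-length parametrization (|u|=1, ⟨u,a⟩=0) with nonvanishing curvature, the product of curvature and torsion satisfies κτ = P(T,B), where (T,N,B) is the Frenet frame. In dimension 3 this equals Ric(T,B). -/
/-!
Read off the binormal component `⟪b, B⟫` of `b = ∇_u a` in two ways. The Frenet expression gives
`κτ`. In the conformal geodesic equation the `u`-term is orthogonal to `B`, so what is left is
`⟪P♯T, B⟫ = P(T, B)`. The trace term `(R/4) g(T, B)` of the Schouten tensor vanishes for the same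
reason, leaving `Ric(T, B)`.
-/

open scoped RealInnerProductSpace

section

variable {E : Type*} [NormedAddCommGroup E] [InnerProductSpace ℝ E]

theorem inner_add_add_smul_eq_of_orthonormal {T N B : E} (hTB : ⟪T, B⟫ = 0) (hNB : ⟪N, B⟫ = 0)
    (hBB : ⟪B, B⟫ = 1) (x y z : ℝ) : ⟪x • T + y • N + z • B, B⟫ = z := by
  simp only [inner_add_left, real_inner_smul_left, hTB, hNB, hBB]
  ring

theorem inner_smul_add_eq_of_inner_eq_zero {T B : E} (hTB : ⟪T, B⟫ = 0) (c : ℝ) (v : E) :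
    ⟪c • T + v, B⟫ = ⟪v, B⟫ := by
  rw [inner_add_left, real_inner_smul_left, hTB, mul_zero, zero_add]

end

theorem conformal_geodesic_kappa_tau_general
    (T N B a b PsharpT : EuclideanSpace ℝ (Fin 3))
    (κ τ κ' R : ℝ)
    (P Ric : EuclideanSpace ℝ (Fin 3) → EuclideanSpace ℝ (Fin 3) → ℝ)
    -- orthonormal Frenet frame
    (hBB : ⟪B, B⟫ = 1)
    (hTB : ⟪T, B⟫ = 0) (hNB : ⟪N, B⟫ = 0)
    -- acceleration and Frenet expression for b = ∇_u a
    (hb : b = (-(κ ^ 2)) • T + κ' • N + (κ * τ) • B)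
    -- P♯ raises an index of P in the T-slot
    (hsharp : ∀ v, ⟪PsharpT, v⟫ = P T v)
    -- the conformal geodesic equation in arc-length parametrization (u = T)
    (hcg : b = (-(1 / 2) * ⟪a, a⟫) • T + PsharpT)
    -- the 3-dimensional Schouten tensor P = Ric − (R/4) g
    (hSchouten : ∀ v w, P v w = Ric v w - (R / 4) * ⟪v, w⟫) :
    κ * τ = P T B ∧ P T B = Ric T B := by
  have frenet : ⟪b, B⟫ = κ * τ := hb ▸ inner_add_add_smul_eq_of_orthonormal hTB hNB hBB _ _ _
  have conformal : ⟪b, B⟫ = P T B := by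
    rw [hcg, inner_smul_add_eq_of_inner_eq_zero hTB, hsharp]
  exact ⟨frenet.symm.trans conformal, by rw [hSchouten, hTB, mul_zero, sub_zero]⟩

/-- along a solution of the conformal geodesic equation
`∇_u a = −(1/2)|a|² u + P♯u` in arc-length parametrization, with Frenet data
`a = κN`, `b = ∇_u a = −κ²T + κ'N + κτB`, one has `κτ = P(T,B)`, and in dimension 3
(Schouten `P = Ric − (R/4)g`) this equals `Ric(T,B)`. The tangent space along the curve is
modelled on `EuclideanSpace ℝ (Fin 3)`. -/
theorem conformal_geodesic_kappa_tau
    (T N B a b PsharpT : EuclideanSpace ℝ (Fin 3))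
    (κ τ κ' R : ℝ)
    (P Ric : EuclideanSpace ℝ (Fin 3) → EuclideanSpace ℝ (Fin 3) → ℝ)
    (hκpos : 0 < κ)
    -- orthonormal Frenet frame
    (hTT : ⟪T, T⟫ = 1) (hNN : ⟪N, N⟫ = 1) (hBB : ⟪B, B⟫ = 1)
    (hTN : ⟪T, N⟫ = 0) (hTB : ⟪T, B⟫ = 0) (hNB : ⟪N, B⟫ = 0)
    -- acceleration and Frenet expression for b = ∇_u a
    (ha : a = κ • N)
    (hb : b = (-(κ ^ 2)) • T + κ' • N + (κ * τ) • B)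
    -- P♯ raises an index of P in the T-slot
    (hsharp : ∀ v, ⟪PsharpT, v⟫ = P T v)
    -- the conformal geodesic equation in arc-length parametrization (u = T)
    (hcg : b = (-(1 / 2) * ⟪a, a⟫) • T + PsharpT)
    -- the 3-dimensional Schouten tensor P = Ric − (R/4) g
    (hSchouten : ∀ v w, P v w = Ric v w - (R / 4) * ⟪v, w⟫) :
    κ * τ = P T B ∧ P T B = Ric T B :=
  conformal_geodesic_kappa_tau_general T N B a b PsharpT κ τ κ' R P Ric hBB hTB hNB hb hsharp hcg
    hSchouten
end

section
/- For L = |u|·det(u,a,b)/|u×a|² on curves in flat ℝ³ (u=ẋ, a=ẍ, b=x⃛), the mixed second derivatives satisfy ∂²L/∂ẍ^i∂x⃛^j = ∂²L/∂ẍ^j∂x⃛^i for all i,j; consequently the Euler–Lagrange equation of L has order at most 4. -/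
open scoped BigOperators

noncomputable section

/-- Third-order jet space of curves in `ℝ³`. -/
abbrev Jet3 := (Fin 3 → ℝ) × (Fin 3 → ℝ) × (Fin 3 → ℝ) × (Fin 3 → ℝ)

def dot (u v : Fin 3 → ℝ) : ℝ := ∑ k, u k * v k

def cross (u v : Fin 3 → ℝ) : Fin 3 → ℝ :=
  ![u 1 * v 2 - u 2 * v 1, u 2 * v 0 - u 0 * v 2, u 0 * v 1 - u 1 * v 0]

def pd0 (L : Jet3 → ℝ) (q : Jet3) (i : Fin 3) : ℝ :=
  fderiv ℝ L q (Pi.single i 1, 0, 0, 0)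

def pd1 (L : Jet3 → ℝ) (q : Jet3) (i : Fin 3) : ℝ :=
  fderiv ℝ L q (0, Pi.single i 1, 0, 0)

def pd2 (L : Jet3 → ℝ) (q : Jet3) (i : Fin 3) : ℝ :=
  fderiv ℝ L q (0, 0, Pi.single i 1, 0)

def pd3 (L : Jet3 → ℝ) (q : Jet3) (i : Fin 3) : ℝ :=
  fderiv ℝ L q (0, 0, 0, Pi.single i 1)

def dk (k : ℕ) (x : ℝ → Fin 3 → ℝ) (t : ℝ) : Fin 3 → ℝ :=
  fun i => iteratedDeriv k (fun s => x s i) t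

def jet (x : ℝ → Fin 3 → ℝ) (t : ℝ) : Jet3 := (x t, dk 1 x t, dk 2 x t, dk 3 x t)

def EL (L : Jet3 → ℝ) (x : ℝ → Fin 3 → ℝ) (t : ℝ) (i : Fin 3) : ℝ :=
  pd0 L (jet x t) i - deriv (fun s => pd1 L (jet x s) i) t
    + iteratedDeriv 2 (fun s => pd2 L (jet x s) i) t
    - iteratedDeriv 3 (fun s => pd3 L (jet x s) i) t

def SmoothCurve (x : ℝ → Fin 3 → ℝ) : Prop := ∀ i, ContDiff ℝ (⊤ : ℕ∞) fun t => x t i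

/-- `∂²L/∂ẍ^i∂x⃛^j`. -/
def mixed (L : Jet3 → ℝ) (q : Jet3) (i j : Fin 3) : ℝ :=
  fderiv ℝ (fun p => pd3 L p j) q (0, 0, Pi.single i 1, 0)

/-- The flat-space conformal-geodesic Lagrangian `L = |u|·det(u,a,b)/|u×a|²`. -/
def Lcg : Jet3 → ℝ := fun q =>
  Real.sqrt (dot q.2.1 q.2.1) * dot (cross q.2.1 q.2.2.1) q.2.2.2 /
    dot (cross q.2.1 q.2.2.1) (cross q.2.1 q.2.2.1)


open scoped ContDiff


lemma single0 : (Pi.single (0:Fin 3) (1:ℝ) : Fin 3 → ℝ) = ![1,0,0] := by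
  funext k; fin_cases k <;> simp
lemma single1 : (Pi.single (1:Fin 3) (1:ℝ) : Fin 3 → ℝ) = ![0,1,0] := by
  funext k; fin_cases k <;> simp
lemma single2 : (Pi.single (2:Fin 3) (1:ℝ) : Fin 3 → ℝ) = ![0,0,1] := by
  funext k; fin_cases k <;> simp

lemma dot_pos {v : Fin 3 → ℝ} (h : v ≠ 0) : 0 < dot v v := by
  have hne : v 0 ≠ 0 ∨ v 1 ≠ 0 ∨ v 2 ≠ 0 := by
    by_contra hc
    push_neg at hc
    exact h (by funext k; fin_cases k <;> simp [hc.1, hc.2.1, hc.2.2])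
  simp only [dot, Fin.sum_univ_three]
  rcases hne with h1 | h1 | h1 <;>
    nlinarith [mul_self_pos.mpr h1, mul_self_nonneg (v 0), mul_self_nonneg (v 1),
      mul_self_nonneg (v 2)]

lemma u_ne_of_cross {u a : Fin 3 → ℝ} (h : cross u a ≠ 0) : u ≠ 0 := by
  intro h0; apply h; subst h0; funext k; fin_cases k <;> simp [cross]

lemma fderiv_line {E : Type*} [NormedAddCommGroup E] [NormedSpace ℝ E] (L : E → ℝ) (q : E)
    (h : DifferentiableAt ℝ L q) (v : E) :
    fderiv ℝ L q v = deriv (fun t : ℝ => L (q + t • v)) 0 := by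
  have hline : HasDerivAt (fun t : ℝ => q + t • v) v 0 := by
    simpa using (((hasDerivAt_id (0:ℝ)).smul_const v).const_add q)
  have h' : HasFDerivAt L (fderiv ℝ L q) (q + (0:ℝ) • v) := by
    simpa using h.hasFDerivAt
  exact ((h'.comp_hasDerivAt 0 hline).deriv).symm

def Wd (u a : Fin 3 → ℝ) : ℝ := dot (cross u a) (cross u a)

def F3 (u a : Fin 3 → ℝ) (j : Fin 3) : ℝ :=
  Real.sqrt (dot u u) * (cross u a j / Wd u a)

lemma diffLcg {q : Jet3} (h : cross q.2.1 q.2.2.1 ≠ 0) : DifferentiableAt ℝ Lcg q := by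
  have huu : (0:ℝ) < dot q.2.1 q.2.1 := dot_pos (u_ne_of_cross h)
  have hW : dot (cross q.2.1 q.2.2.1) (cross q.2.1 q.2.2.1) ≠ 0 := ne_of_gt (dot_pos h)
  have h1 : DifferentiableAt ℝ (fun p : Jet3 => dot p.2.1 p.2.1) q := by
    simp only [dot, Fin.sum_univ_three]; fun_prop
  have h2 : DifferentiableAt ℝ (fun p : Jet3 => Real.sqrt (dot p.2.1 p.2.1)) q :=
    ((Real.hasDerivAt_sqrt (ne_of_gt huu)).differentiableAt).comp q h1
  have h3 : DifferentiableAt ℝ (fun p : Jet3 => dot (cross p.2.1 p.2.2.1) p.2.2.2) q := by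
    simp only [dot, cross, Fin.sum_univ_three, Matrix.cons_val_zero, Matrix.cons_val_one,
      Matrix.head_cons, Matrix.cons_val_two, Matrix.tail_cons]
    fun_prop
  have h4 : DifferentiableAt ℝ
      (fun p : Jet3 => dot (cross p.2.1 p.2.2.1) (cross p.2.1 p.2.2.1)) q := by
    simp only [dot, cross, Fin.sum_univ_three, Matrix.cons_val_zero, Matrix.cons_val_one,
      Matrix.head_cons, Matrix.cons_val_two, Matrix.tail_cons]
    fun_prop
  have h5 : DifferentiableAt ℝ (fun p : Jet3 =>
      Real.sqrt (dot p.2.1 p.2.1) * dot (cross p.2.1 p.2.2.1) p.2.2.2) q := h2.mul h3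
  have h6 : DifferentiableAt ℝ (fun p : Jet3 =>
      Real.sqrt (dot p.2.1 p.2.1) * dot (cross p.2.1 p.2.2.1) p.2.2.2 *
        (dot (cross p.2.1 p.2.2.1) (cross p.2.1 p.2.2.1))⁻¹) q := h5.mul (h4.inv hW)
  unfold Lcg
  simpa only [div_eq_mul_inv] using h6

lemma pd0_eq {x u a b : Fin 3 → ℝ} (h : cross u a ≠ 0) (i : Fin 3) :
    pd0 Lcg (x,u,a,b) i = 0 := by
  rw [pd0, fderiv_line _ _ (diffLcg (q := (x,u,a,b)) h)]
  have : (fun t : ℝ => Lcg ((x,u,a,b) + t • ((Pi.single i 1,0,0,0) : Jet3)))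
      = fun _ => Lcg (x,u,a,b) := by
    funext t
    have hpt : ((x,u,a,b) : Jet3) + t • ((Pi.single i 1,0,0,0) : Jet3)
        = (x + t • (Pi.single i 1 : Fin 3 → ℝ), u, a, b) := by simp [Prod.ext_iff]
    rw [hpt]; rfl
  rw [this, deriv_const]

lemma deriv_affine (c m : ℝ) : deriv (fun t : ℝ => c + t * m) 0 = m := by
  simpa using (((hasDerivAt_id (0:ℝ)).mul_const m).const_add c).deriv

lemma hasDerivAt_linquad (s P Q A B C : ℝ) (hA : A ≠ 0) :
    HasDerivAt (fun t : ℝ => s * ((P + t * Q) / (A + t * B + t ^ 2 * C)))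
      (s * ((Q * A - P * B) / A ^ 2)) 0 := by
  have h1 : HasDerivAt (fun t : ℝ => P + t * Q) Q 0 := by
    simpa using ((hasDerivAt_id (0:ℝ)).mul_const Q).const_add P
  have h2 : HasDerivAt (fun t : ℝ => A + t * B + t ^ 2 * C) B 0 := by
    have := (((hasDerivAt_id (0:ℝ)).mul_const B).const_add A).add
      ((hasDerivAt_pow 2 (0:ℝ)).mul_const C)
    simpa [Pi.add_def] using this
  have h3 : A + (0:ℝ) * B + (0:ℝ) ^ 2 * C ≠ 0 := by simpa using hA
  have h4 := (h1.div h2 h3).const_mul s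
  refine h4.congr_deriv ?_
  norm_num

lemma hasDerivAt_sqrtquad (uu m P Q A B C : ℝ) (huu : uu ≠ 0) (hA : A ≠ 0) :
    HasDerivAt (fun t : ℝ => Real.sqrt (uu + t * m + t ^ 2 * 1) *
        ((P + t * Q) / (A + t * B + t ^ 2 * C)))
      (1 / (2 * Real.sqrt uu) * m * (P / A) + Real.sqrt uu * ((Q * A - P * B) / A ^ 2)) 0 := by
  have h1 : HasDerivAt (fun t : ℝ => P + t * Q) Q 0 := by
    simpa using ((hasDerivAt_id (0:ℝ)).mul_const Q).const_add P
  have h2 : HasDerivAt (fun t : ℝ => A + t * B + t ^ 2 * C) B 0 := by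
    have := (((hasDerivAt_id (0:ℝ)).mul_const B).const_add A).add
      ((hasDerivAt_pow 2 (0:ℝ)).mul_const C)
    simpa [Pi.add_def] using this
  have h3 : A + (0:ℝ) * B + (0:ℝ) ^ 2 * C ≠ 0 := by simpa using hA
  have hdiv := h1.div h2 h3
  have hin : HasDerivAt (fun t : ℝ => uu + t * m + t ^ 2 * 1) m 0 := by
    have := (((hasDerivAt_id (0:ℝ)).mul_const m).const_add uu).add
      ((hasDerivAt_pow 2 (0:ℝ)).mul_const 1)
    simpa [Pi.add_def] using this
  have hsq : HasDerivAt Real.sqrt (1 / (2 * Real.sqrt uu))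
      ((fun t : ℝ => uu + t * m + t ^ 2 * 1) 0) := by
    have h0 : (fun t : ℝ => uu + t * m + t ^ 2 * 1) 0 = uu := by norm_num
    rw [h0]; exact Real.hasDerivAt_sqrt huu
  have hs := hsq.comp 0 hin
  have := hs.mul hdiv
  refine this.congr_deriv ?_
  have h0 : (fun t : ℝ => uu + t * m + t ^ 2 * 1) 0 = uu := by norm_num
  norm_num [Function.comp_apply]

def F2 (u a b : Fin 3 → ℝ) (i : Fin 3) : ℝ :=
  Real.sqrt (dot u u) * ((dot (cross u (Pi.single i 1)) b * Wd u a -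
    dot (cross u a) b * (2 * dot (cross u a) (cross u (Pi.single i 1)))) / Wd u a ^ 2)

def F1 (u a b : Fin 3 → ℝ) (i : Fin 3) : ℝ :=
  1 / (2 * Real.sqrt (dot u u)) * (2 * u i) * (dot (cross u a) b / Wd u a) +
  Real.sqrt (dot u u) * ((dot (cross (Pi.single i 1) a) b * Wd u a -
    dot (cross u a) b * (2 * dot (cross u a) (cross (Pi.single i 1) a))) / Wd u a ^ 2)

def Mx (u a : Fin 3 → ℝ) (i j : Fin 3) : ℝ :=
  Real.sqrt (dot u u) * ((cross u (Pi.single i 1) j * Wd u a -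
    cross u a j * (2 * dot (cross u a) (cross u (Pi.single i 1)))) / Wd u a ^ 2)

lemma pd3_eq {x u a b : Fin 3 → ℝ} (h : cross u a ≠ 0) (j : Fin 3) :
    pd3 Lcg (x,u,a,b) j = F3 u a j := by
  rw [pd3, fderiv_line _ _ (diffLcg (q := (x,u,a,b)) h)]
  have hfun : (fun t : ℝ => Lcg ((x,u,a,b) + t • ((0,0,0,(Pi.single j 1 : Fin 3 → ℝ)) : Jet3)))
      = fun t : ℝ => Lcg (x,u,a,b) + t * F3 u a j := by
    funext t
    have hpt : ((x,u,a,b) : Jet3) + t • ((0,0,0,(Pi.single j 1 : Fin 3 → ℝ)) : Jet3)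
        = (x, u, a, b + t • (Pi.single j 1 : Fin 3 → ℝ)) := by simp [Prod.ext_iff]
    rw [hpt]
    fin_cases j <;>
      (simp [Lcg, F3, Wd, dot, cross, Fin.sum_univ_three, single0, single1, single2]; ring)
  rw [hfun, deriv_affine]

lemma pd2_eq {x u a b : Fin 3 → ℝ} (h : cross u a ≠ 0) (i : Fin 3) :
    pd2 Lcg (x,u,a,b) i = F2 u a b i := by
  have hW : Wd u a ≠ 0 := ne_of_gt (dot_pos h)
  rw [pd2, fderiv_line _ _ (diffLcg (q := (x,u,a,b)) h)]
  have hfun : (fun t : ℝ => Lcg ((x,u,a,b) + t • ((0,0,(Pi.single i 1 : Fin 3 → ℝ),0) : Jet3)))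
      = fun t : ℝ => Real.sqrt (dot u u) * ((dot (cross u a) b + t * dot (cross u (Pi.single i 1)) b) /
          (Wd u a + t * (2 * dot (cross u a) (cross u (Pi.single i 1))) +
            t ^ 2 * dot (cross u (Pi.single i 1)) (cross u (Pi.single i 1)))) := by
    funext t
    have hpt : ((x,u,a,b) : Jet3) + t • ((0,0,(Pi.single i 1 : Fin 3 → ℝ),0) : Jet3)
        = (x, u, a + t • (Pi.single i 1 : Fin 3 → ℝ), b) := by simp [Prod.ext_iff]
    rw [hpt]
    fin_cases i <;>
      (simp [Lcg, Wd, dot, cross, Fin.sum_univ_three, single0, single1, single2]; ring)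
  rw [hfun, (hasDerivAt_linquad _ _ _ _ _ _ hW).deriv]
  rfl

lemma pd1_eq {x u a b : Fin 3 → ℝ} (h : cross u a ≠ 0) (i : Fin 3) :
    pd1 Lcg (x,u,a,b) i = F1 u a b i := by
  have hW : Wd u a ≠ 0 := ne_of_gt (dot_pos h)
  have huu : dot u u ≠ 0 := ne_of_gt (dot_pos (u_ne_of_cross h))
  rw [pd1, fderiv_line _ _ (diffLcg (q := (x,u,a,b)) h)]
  have hfun : (fun t : ℝ => Lcg ((x,u,a,b) + t • ((0,(Pi.single i 1 : Fin 3 → ℝ),0,0) : Jet3)))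
      = fun t : ℝ => Real.sqrt (dot u u + t * (2 * u i) + t ^ 2 * 1) *
          ((dot (cross u a) b + t * dot (cross (Pi.single i 1) a) b) /
          (Wd u a + t * (2 * dot (cross u a) (cross (Pi.single i 1) a)) +
            t ^ 2 * dot (cross (Pi.single i 1) a) (cross (Pi.single i 1) a))) := by
    funext t
    have hpt : ((x,u,a,b) : Jet3) + t • ((0,(Pi.single i 1 : Fin 3 → ℝ),0,0) : Jet3)
        = (x, u + t • (Pi.single i 1 : Fin 3 → ℝ), a, b) := by simp [Prod.ext_iff]
    rw [hpt]
    show Real.sqrt (dot (u + t • (Pi.single i 1 : Fin 3 → ℝ)) (u + t • (Pi.single i 1 : Fin 3 → ℝ))) *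
        dot (cross (u + t • (Pi.single i 1 : Fin 3 → ℝ)) a) b /
        dot (cross (u + t • (Pi.single i 1 : Fin 3 → ℝ)) a) (cross (u + t • (Pi.single i 1 : Fin 3 → ℝ)) a) = _
    have hsq : dot (u + t • (Pi.single i 1 : Fin 3 → ℝ)) (u + t • (Pi.single i 1 : Fin 3 → ℝ))
        = dot u u + t * (2 * u i) + t ^ 2 * 1 := by
      fin_cases i <;> (simp [dot, Fin.sum_univ_three, single0, single1, single2]; ring)
    rw [hsq]
    fin_cases i <;>
      (simp [Wd, dot, cross, Fin.sum_univ_three, single0, single1, single2]; ring)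
  rw [hfun, (hasDerivAt_sqrtquad _ _ _ _ _ _ _ huu hW).deriv]
  rfl

lemma contDot : Continuous (fun p : Jet3 => dot (cross p.2.1 p.2.2.1) (cross p.2.1 p.2.2.1)) := by
  simp only [dot, cross, Fin.sum_univ_three, Matrix.cons_val_zero, Matrix.cons_val_one,
    Matrix.head_cons, Matrix.cons_val_two, Matrix.tail_cons]
  fun_prop

lemma diffF3 {q : Jet3} (h : cross q.2.1 q.2.2.1 ≠ 0) (j : Fin 3) :
    DifferentiableAt ℝ (fun p : Jet3 => F3 p.2.1 p.2.2.1 j) q := by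
  have huu : (0:ℝ) < dot q.2.1 q.2.1 := dot_pos (u_ne_of_cross h)
  have hW : dot (cross q.2.1 q.2.2.1) (cross q.2.1 q.2.2.1) ≠ 0 := ne_of_gt (dot_pos h)
  have h1 : DifferentiableAt ℝ (fun p : Jet3 => dot p.2.1 p.2.1) q := by
    simp only [dot, Fin.sum_univ_three]; fun_prop
  have h2 : DifferentiableAt ℝ (fun p : Jet3 => Real.sqrt (dot p.2.1 p.2.1)) q :=
    ((Real.hasDerivAt_sqrt (ne_of_gt huu)).differentiableAt).comp q h1
  have h4 : DifferentiableAt ℝ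
      (fun p : Jet3 => dot (cross p.2.1 p.2.2.1) (cross p.2.1 p.2.2.1)) q := by
    simp only [dot, cross, Fin.sum_univ_three, Matrix.cons_val_zero, Matrix.cons_val_one,
      Matrix.head_cons, Matrix.cons_val_two, Matrix.tail_cons]
    fun_prop
  have hc : DifferentiableAt ℝ (fun p : Jet3 => cross p.2.1 p.2.2.1 j) q := by
    fin_cases j <;> (simp only [cross, Fin.zero_eta, Fin.mk_one, Matrix.cons_val_zero,
      Matrix.cons_val_one, Matrix.head_cons, Matrix.cons_val_two, Matrix.tail_cons,
      Fin.isValue, Fin.reduceFinMk]; fun_prop)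
  have h6 : DifferentiableAt ℝ (fun p : Jet3 => Real.sqrt (dot p.2.1 p.2.1) *
      (cross p.2.1 p.2.2.1 j * (dot (cross p.2.1 p.2.2.1) (cross p.2.1 p.2.2.1))⁻¹)) q :=
    h2.mul (hc.mul (h4.inv hW))
  simpa only [F3, Wd, div_eq_mul_inv] using h6

lemma mixed_eq {x u a b : Fin 3 → ℝ} (h : cross u a ≠ 0) (i j : Fin 3) :
    mixed Lcg (x,u,a,b) i j = Mx u a i j := by
  have hW : Wd u a ≠ 0 := ne_of_gt (dot_pos h)
  have hopen : IsOpen {p : Jet3 | dot (cross p.2.1 p.2.2.1) (cross p.2.1 p.2.2.1) ≠ 0} := by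
    have := (isOpen_compl_singleton (x := (0:ℝ))).preimage contDot
    simpa [Set.preimage, Set.mem_compl_iff] using this
  have hev : (fun p : Jet3 => pd3 Lcg p j) =ᶠ[nhds ((x,u,a,b) : Jet3)]
      fun p => F3 p.2.1 p.2.2.1 j := by
    filter_upwards [hopen.mem_nhds (by exact hW)] with p hp
    have hp' : cross p.2.1 p.2.2.1 ≠ 0 := by
      intro h0
      apply hp
      simp [h0, dot]
    have := pd3_eq (x := p.1) (u := p.2.1) (a := p.2.2.1) (b := p.2.2.2) hp' j
    simpa using this
  rw [mixed, hev.fderiv_eq, fderiv_line _ _ (diffF3 (q := (x,u,a,b)) h j)]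
  have hfun : (fun t : ℝ =>
      (fun p : Jet3 => F3 p.2.1 p.2.2.1 j)
        ((x,u,a,b) + t • ((0,0,(Pi.single i 1 : Fin 3 → ℝ),0) : Jet3)))
      = fun t : ℝ => Real.sqrt (dot u u) *
          ((cross u a j + t * cross u (Pi.single i 1) j) /
          (Wd u a + t * (2 * dot (cross u a) (cross u (Pi.single i 1))) +
            t ^ 2 * dot (cross u (Pi.single i 1)) (cross u (Pi.single i 1)))) := by
    funext t
    have hpt : ((x,u,a,b) : Jet3) + t • ((0,0,(Pi.single i 1 : Fin 3 → ℝ),0) : Jet3)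
        = (x, u, a + t • (Pi.single i 1 : Fin 3 → ℝ), b) := by simp [Prod.ext_iff]
    rw [hpt]
    fin_cases i <;> fin_cases j <;>
      (simp [F3, Wd, dot, cross, Fin.sum_univ_three, single0, single1, single2]; try ring) <;>
      tauto
  rw [hfun, (hasDerivAt_linquad _ _ _ _ _ _ hW).deriv]
  rfl

lemma Mx_symm {u a : Fin 3 → ℝ} (i j : Fin 3) : Mx u a i j = Mx u a j i := by
  unfold Mx
  congr 1
  fin_cases i <;> fin_cases j <;>
    (simp [Wd, dot, cross, Fin.sum_univ_three, single0, single1, single2]; try ring) <;> tauto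

theorem part1 (q : Jet3) (hq : cross q.2.1 q.2.2.1 ≠ 0) (i j : Fin 3) :
    mixed Lcg q i j = mixed Lcg q j i := by
  obtain ⟨x,u,a,b⟩ := q
  rw [mixed_eq hq i j, mixed_eq hq j i, Mx_symm]


-- appended after p1 content
section Curve

variable {x : ℝ → Fin 3 → ℝ}

lemma dksm (hx : SmoothCurve x) (k : ℕ) (i : Fin 3) : ContDiff ℝ ∞ (fun s => dk k x s i) := by
  simp only [dk, iteratedDeriv_eq_iterate]
  exact ((hx i).of_le (by simp)).iterate_deriv k

lemma hD (hx : SmoothCurve x) (k : ℕ) (i : Fin 3) (t : ℝ) :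
    HasDerivAt (fun s => dk k x s i) (dk (k+1) x t i) t := by
  have h1 := ((dksm hx k i).differentiable (by norm_num) t).hasDerivAt
  have h2 : deriv (fun s => dk k x s i) t = dk (k+1) x t i := by
    simp only [dk, iteratedDeriv_succ]
  rwa [h2] at h1

lemma hCR (hx : SmoothCurve x) (i : Fin 3) (t : ℝ) :
    HasDerivAt (fun s => cross (dk 1 x s) (dk 2 x s) i)
      (cross (dk 1 x t) (dk 3 x t) i) t := by
  fin_cases i <;>
  · simp only [cross, Matrix.cons_val_zero, Matrix.cons_val_one, Matrix.head_cons,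
      Matrix.cons_val_two, Matrix.tail_cons, Fin.zero_eta, Fin.mk_one, Fin.isValue,
      Fin.reduceFinMk]
    refine (((hD hx 1 _ t).mul (hD hx 2 _ t)).sub ((hD hx 1 _ t).mul (hD hx 2 _ t))).congr_deriv ?_
    ring

lemma hWD (hx : SmoothCurve x) (t : ℝ) :
    HasDerivAt (fun s => Wd (dk 1 x s) (dk 2 x s))
      (2 * dot (cross (dk 1 x t) (dk 2 x t)) (cross (dk 1 x t) (dk 3 x t))) t := by
  simp only [Wd, dot, Fin.sum_univ_three]
  refine ((((hCR hx 0 t).mul (hCR hx 0 t)).add ((hCR hx 1 t).mul (hCR hx 1 t))).add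
    ((hCR hx 2 t).mul (hCR hx 2 t))).congr_deriv ?_
  ring

lemma hUU (hx : SmoothCurve x) (t : ℝ) :
    HasDerivAt (fun s => dot (dk 1 x s) (dk 1 x s)) (2 * dot (dk 1 x t) (dk 2 x t)) t := by
  simp only [dot, Fin.sum_univ_three]
  refine ((((hD hx 1 0 t).mul (hD hx 1 0 t)).add ((hD hx 1 1 t).mul (hD hx 1 1 t))).add
    ((hD hx 1 2 t).mul (hD hx 1 2 t))).congr_deriv ?_
  ring

lemma hUA (hx : SmoothCurve x) (t : ℝ) :
    HasDerivAt (fun s => dot (dk 1 x s) (dk 2 x s))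
      (dot (dk 2 x t) (dk 2 x t) + dot (dk 1 x t) (dk 3 x t)) t := by
  simp only [dot, Fin.sum_univ_three]
  refine ((((hD hx 1 0 t).mul (hD hx 2 0 t)).add ((hD hx 1 1 t).mul (hD hx 2 1 t))).add
    ((hD hx 1 2 t).mul (hD hx 2 2 t))).congr_deriv ?_
  ring

lemma hSQ (hx : SmoothCurve x) (t : ℝ) (h : 0 < dot (dk 1 x t) (dk 1 x t)) :
    HasDerivAt (fun s => Real.sqrt (dot (dk 1 x s) (dk 1 x s)))
      (dot (dk 1 x t) (dk 2 x t) / Real.sqrt (dot (dk 1 x t) (dk 1 x t))) t := by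
  have h2 := (Real.hasDerivAt_sqrt h.ne').comp t (hUU hx t)
  have hsne : Real.sqrt (dot (dk 1 x t) (dk 1 x t)) ≠ 0 := (Real.sqrt_pos.mpr h).ne'
  refine h2.congr_deriv ?_
  rw [div_mul_eq_mul_div, one_mul, mul_div_mul_left _ _ two_ne_zero]

end Curve


def Rf (u a b : Fin 3 → ℝ) (i : Fin 3) : ℝ :=
  dot u a / Real.sqrt (dot u u) * (cross u a i / Wd u a) +
  Real.sqrt (dot u u) * ((cross u b i * Wd u a -
    cross u a i * (2 * dot (cross u a) (cross u b))) / Wd u a ^ 2)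

def Psi (u a : Fin 3 → ℝ) (i : Fin 3) : ℝ :=
  -(dot u a) / Real.sqrt (dot u u) * (cross u a i / Wd u a)

def R2f (u a b : Fin 3 → ℝ) (i : Fin 3) : ℝ :=
  (-(dot a a + dot u b) * Real.sqrt (dot u u) -
      -(dot u a) * (dot u a / Real.sqrt (dot u u))) / Real.sqrt (dot u u) ^ 2 *
    (cross u a i / Wd u a) +
  -(dot u a) / Real.sqrt (dot u u) * ((cross u b i * Wd u a -
    cross u a i * (2 * dot (cross u a) (cross u b))) / Wd u a ^ 2)

lemma keyIdent {u a b : Fin 3 → ℝ} (h : cross u a ≠ 0) (i : Fin 3) :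
    F2 u a b i = Psi u a i + Rf u a b i := by
  fin_cases i <;>
    (simp [F2, Psi, Rf, Wd, dot, cross, Fin.sum_univ_three, single0, single1, single2];
     try ring) <;> tauto

section Curve2

variable {x : ℝ → Fin 3 → ℝ}

lemma hG3 (hx : SmoothCurve x) (t : ℝ) (hc : cross (dk 1 x t) (dk 2 x t) ≠ 0) (i : Fin 3) :
    HasDerivAt (fun s => F3 (dk 1 x s) (dk 2 x s) i)
      (Rf (dk 1 x t) (dk 2 x t) (dk 3 x t) i) t := by
  have hpos := dot_pos (u_ne_of_cross hc)
  have hWne : Wd (dk 1 x t) (dk 2 x t) ≠ 0 := ne_of_gt (dot_pos hc)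
  exact (hSQ hx t hpos).mul ((hCR hx i t).div (hWD hx t) hWne)

lemma hGPsi (hx : SmoothCurve x) (t : ℝ) (hc : cross (dk 1 x t) (dk 2 x t) ≠ 0) (i : Fin 3) :
    HasDerivAt (fun s => Psi (dk 1 x s) (dk 2 x s) i)
      (R2f (dk 1 x t) (dk 2 x t) (dk 3 x t) i) t := by
  have hpos := dot_pos (u_ne_of_cross hc)
  have hWne : Wd (dk 1 x t) (dk 2 x t) ≠ 0 := ne_of_gt (dot_pos hc)
  have hsne : Real.sqrt (dot (dk 1 x t) (dk 1 x t)) ≠ 0 := (Real.sqrt_pos.mpr hpos).ne'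
  exact ((hUA hx t).neg.div (hSQ hx t hpos) hsne).mul ((hCR hx i t).div (hWD hx t) hWne)

lemma hRfSmooth (hx : SmoothCurve x) (hw : ∀ s, cross (dk 1 x s) (dk 2 x s) ≠ 0) (i : Fin 3) :
    ContDiff ℝ ∞ (fun s => Rf (dk 1 x s) (dk 2 x s) (dk 3 x s) i) := by
  have hco : ∀ (k : ℕ) (j : Fin 3), ContDiff ℝ ∞ (fun s => dk k x s j) := dksm hx
  rw [contDiff_iff_contDiffAt]
  intro s
  have hpos := dot_pos (u_ne_of_cross (hw s))
  have hWne : Wd (dk 1 x s) (dk 2 x s) ≠ 0 := ne_of_gt (dot_pos (hw s))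
  have hsne : Real.sqrt (dot (dk 1 x s) (dk 1 x s)) ≠ 0 := (Real.sqrt_pos.mpr hpos).ne'
  have hduu : ContDiffAt ℝ ∞ (fun r => dot (dk 1 x r) (dk 1 x r)) s := by
    simp only [dot, Fin.sum_univ_three]
    exact (((hco 1 0).mul (hco 1 0)).add (((hco 1 1).mul (hco 1 1)))).contDiffAt.add
      (((hco 1 2).mul (hco 1 2)).contDiffAt)
  have hsq : ContDiffAt ℝ ∞ (fun r => Real.sqrt (dot (dk 1 x r) (dk 1 x r))) s :=
    hduu.sqrt hpos.ne'
  have hdua : ContDiffAt ℝ ∞ (fun r => dot (dk 1 x r) (dk 2 x r)) s := by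
    simp only [dot, Fin.sum_univ_three]
    exact (((hco 1 0).mul (hco 2 0)).add (((hco 1 1).mul (hco 2 1)))).contDiffAt.add
      (((hco 1 2).mul (hco 2 2)).contDiffAt)
  have hcr : ∀ j : Fin 3, ContDiffAt ℝ ∞ (fun r => cross (dk 1 x r) (dk 2 x r) j) s := by
    intro j
    fin_cases j <;>
      (simp only [cross, Matrix.cons_val_zero, Matrix.cons_val_one, Matrix.head_cons,
        Matrix.cons_val_two, Matrix.tail_cons, Fin.zero_eta, Fin.mk_one, Fin.isValue,
        Fin.reduceFinMk]; fun_prop)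
  have hcb : ∀ j : Fin 3, ContDiffAt ℝ ∞ (fun r => cross (dk 1 x r) (dk 3 x r) j) s := by
    intro j
    fin_cases j <;>
      (simp only [cross, Matrix.cons_val_zero, Matrix.cons_val_one, Matrix.head_cons,
        Matrix.cons_val_two, Matrix.tail_cons, Fin.zero_eta, Fin.mk_one, Fin.isValue,
        Fin.reduceFinMk]; fun_prop)
  have hWdc : ContDiffAt ℝ ∞ (fun r => Wd (dk 1 x r) (dk 2 x r)) s := by
    simp only [Wd, dot, Fin.sum_univ_three]
    exact (((hcr 0).mul (hcr 0)).add ((hcr 1).mul (hcr 1))).add ((hcr 2).mul (hcr 2))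
  have hdwb : ContDiffAt ℝ ∞ (fun r => dot (cross (dk 1 x r) (dk 2 x r))
      (cross (dk 1 x r) (dk 3 x r))) s := by
    simp only [dot, Fin.sum_univ_three]
    exact (((hcr 0).mul (hcb 0)).add ((hcr 1).mul (hcb 1))).add ((hcr 2).mul (hcb 2))
  have h1 : ContDiffAt ℝ ∞ (fun r => dot (dk 1 x r) (dk 2 x r) /
      Real.sqrt (dot (dk 1 x r) (dk 1 x r)) *
      (cross (dk 1 x r) (dk 2 x r) i / Wd (dk 1 x r) (dk 2 x r))) s :=
    (hdua.div hsq hsne).mul ((hcr i).div hWdc hWne)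
  have h2 : ContDiffAt ℝ ∞ (fun r => Real.sqrt (dot (dk 1 x r) (dk 1 x r)) *
      ((cross (dk 1 x r) (dk 3 x r) i * Wd (dk 1 x r) (dk 2 x r) -
        cross (dk 1 x r) (dk 2 x r) i *
          (2 * dot (cross (dk 1 x r) (dk 2 x r)) (cross (dk 1 x r) (dk 3 x r)))) /
        Wd (dk 1 x r) (dk 2 x r) ^ 2)) s :=
    hsq.mul ((((hcb i).mul hWdc).sub ((hcr i).mul (contDiffAt_const.mul hdwb))).div
      (hWdc.pow 2) (pow_ne_zero 2 hWne))
  exact h1.add h2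

end Curve2


abbrev E3 := (Fin 3 → ℝ) × (Fin 3 → ℝ) × (Fin 3 → ℝ)

lemma diffF1E (p : E3) (h : cross p.1 p.2.1 ≠ 0) (i : Fin 3) :
    DifferentiableAt ℝ (fun q : E3 => F1 q.1 q.2.1 q.2.2 i) p := by
  have hpos : (0:ℝ) < dot p.1 p.1 := dot_pos (u_ne_of_cross h)
  have hW : Wd p.1 p.2.1 ≠ 0 := ne_of_gt (dot_pos h)
  have hsne : Real.sqrt (dot p.1 p.1) ≠ 0 := (Real.sqrt_pos.mpr hpos).ne'
  have h2s : (2:ℝ) * Real.sqrt (dot p.1 p.1) ≠ 0 := mul_ne_zero two_ne_zero hsne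
  have hduu : DifferentiableAt ℝ (fun q : E3 => dot q.1 q.1) p := by
    simp only [dot, Fin.sum_univ_three]; fun_prop
  have hsq : DifferentiableAt ℝ (fun q : E3 => Real.sqrt (dot q.1 q.1)) p := hduu.sqrt hpos.ne'
  have hui : DifferentiableAt ℝ (fun q : E3 => q.1 i) p := by fun_prop
  have hwb : DifferentiableAt ℝ (fun q : E3 => dot (cross q.1 q.2.1) q.2.2) p := by
    simp only [dot, cross, Fin.sum_univ_three, Matrix.cons_val_zero, Matrix.cons_val_one,
      Matrix.head_cons, Matrix.cons_val_two, Matrix.tail_cons]; fun_prop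
  have hWd : DifferentiableAt ℝ (fun q : E3 => Wd q.1 q.2.1) p := by
    simp only [Wd, dot, cross, Fin.sum_univ_three, Matrix.cons_val_zero, Matrix.cons_val_one,
      Matrix.head_cons, Matrix.cons_val_two, Matrix.tail_cons]; fun_prop
  have hcei : DifferentiableAt ℝ (fun q : E3 => dot (cross (Pi.single i 1) q.2.1) q.2.2) p := by
    fin_cases i <;> (simp only [dot, cross, single0, single1, single2, Fin.sum_univ_three,
      Matrix.cons_val_zero, Matrix.cons_val_one, Matrix.head_cons, Matrix.cons_val_two,
      Matrix.tail_cons]; fun_prop)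
  have hwcei : DifferentiableAt ℝ
      (fun q : E3 => dot (cross q.1 q.2.1) (cross (Pi.single i 1) q.2.1)) p := by
    fin_cases i <;> (simp only [dot, cross, single0, single1, single2, Fin.sum_univ_three,
      Matrix.cons_val_zero, Matrix.cons_val_one, Matrix.head_cons, Matrix.cons_val_two,
      Matrix.tail_cons]; fun_prop)
  have hA : DifferentiableAt ℝ (fun q : E3 =>
      1 * ((2:ℝ) * Real.sqrt (dot q.1 q.1))⁻¹ * (2 * q.1 i) *
        (dot (cross q.1 q.2.1) q.2.2 * (Wd q.1 q.2.1)⁻¹)) p :=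
    (((differentiableAt_const 1).mul (((differentiableAt_const 2).mul hsq).inv h2s)).mul
      ((differentiableAt_const 2).mul hui)).mul (hwb.mul (hWd.inv hW))
  have hB : DifferentiableAt ℝ (fun q : E3 =>
      Real.sqrt (dot q.1 q.1) * ((dot (cross (Pi.single i 1) q.2.1) q.2.2 * Wd q.1 q.2.1 -
        dot (cross q.1 q.2.1) q.2.2 * (2 * dot (cross q.1 q.2.1) (cross (Pi.single i 1) q.2.1))) *
        (Wd q.1 q.2.1 ^ 2)⁻¹)) p :=
    hsq.mul (((hcei.mul hWd).sub (hwb.mul ((differentiableAt_const 2).mul hwcei))).mul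
      ((hWd.pow 2).inv (pow_ne_zero 2 hW)))
  have := hA.add hB
  simpa only [F1, div_eq_mul_inv, Pi.add_def] using this

lemma diffR2fE (p : E3) (h : cross p.1 p.2.1 ≠ 0) (i : Fin 3) :
    DifferentiableAt ℝ (fun q : E3 => R2f q.1 q.2.1 q.2.2 i) p := by
  have hpos : (0:ℝ) < dot p.1 p.1 := dot_pos (u_ne_of_cross h)
  have hW : Wd p.1 p.2.1 ≠ 0 := ne_of_gt (dot_pos h)
  have hsne : Real.sqrt (dot p.1 p.1) ≠ 0 := (Real.sqrt_pos.mpr hpos).ne'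
  have hduu : DifferentiableAt ℝ (fun q : E3 => dot q.1 q.1) p := by
    simp only [dot, Fin.sum_univ_three]; fun_prop
  have hsq : DifferentiableAt ℝ (fun q : E3 => Real.sqrt (dot q.1 q.1)) p := hduu.sqrt hpos.ne'
  have hdua : DifferentiableAt ℝ (fun q : E3 => dot q.1 q.2.1) p := by
    simp only [dot, Fin.sum_univ_three]; fun_prop
  have hdaa : DifferentiableAt ℝ (fun q : E3 => dot q.2.1 q.2.1) p := by
    simp only [dot, Fin.sum_univ_three]; fun_prop
  have hdub : DifferentiableAt ℝ (fun q : E3 => dot q.1 q.2.2) p := by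
    simp only [dot, Fin.sum_univ_three]; fun_prop
  have hwi : DifferentiableAt ℝ (fun q : E3 => cross q.1 q.2.1 i) p := by
    fin_cases i <;> (simp only [cross, Matrix.cons_val_zero, Matrix.cons_val_one,
      Matrix.head_cons, Matrix.cons_val_two, Matrix.tail_cons, Fin.zero_eta, Fin.mk_one,
      Fin.isValue, Fin.reduceFinMk]; fun_prop)
  have hwbi : DifferentiableAt ℝ (fun q : E3 => cross q.1 q.2.2 i) p := by
    fin_cases i <;> (simp only [cross, Matrix.cons_val_zero, Matrix.cons_val_one,
      Matrix.head_cons, Matrix.cons_val_two, Matrix.tail_cons, Fin.zero_eta, Fin.mk_one,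
      Fin.isValue, Fin.reduceFinMk]; fun_prop)
  have hWd : DifferentiableAt ℝ (fun q : E3 => Wd q.1 q.2.1) p := by
    simp only [Wd, dot, cross, Fin.sum_univ_three, Matrix.cons_val_zero, Matrix.cons_val_one,
      Matrix.head_cons, Matrix.cons_val_two, Matrix.tail_cons]; fun_prop
  have hdwb : DifferentiableAt ℝ (fun q : E3 => dot (cross q.1 q.2.1) (cross q.1 q.2.2)) p := by
    simp only [dot, cross, Fin.sum_univ_three, Matrix.cons_val_zero, Matrix.cons_val_one,
      Matrix.head_cons, Matrix.cons_val_two, Matrix.tail_cons]; fun_prop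
  have hA : DifferentiableAt ℝ (fun q : E3 =>
      (-(dot q.2.1 q.2.1 + dot q.1 q.2.2) * Real.sqrt (dot q.1 q.1) -
        -(dot q.1 q.2.1) * (dot q.1 q.2.1 * (Real.sqrt (dot q.1 q.1))⁻¹)) *
        (Real.sqrt (dot q.1 q.1) ^ 2)⁻¹ *
      (cross q.1 q.2.1 i * (Wd q.1 q.2.1)⁻¹)) p :=
    ((((hdaa.add hdub).neg.mul hsq).sub
      (hdua.neg.mul (hdua.mul (hsq.inv hsne)))).mul
        ((hsq.pow 2).inv (pow_ne_zero 2 hsne))).mul (hwi.mul (hWd.inv hW))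
  have hB : DifferentiableAt ℝ (fun q : E3 =>
      -(dot q.1 q.2.1) * (Real.sqrt (dot q.1 q.1))⁻¹ *
        ((cross q.1 q.2.2 i * Wd q.1 q.2.1 -
          cross q.1 q.2.1 i * (2 * dot (cross q.1 q.2.1) (cross q.1 q.2.2))) *
          (Wd q.1 q.2.1 ^ 2)⁻¹)) p :=
    (hdua.neg.mul (hsq.inv hsne)).mul
      (((hwbi.mul hWd).sub (hwi.mul ((differentiableAt_const 2).mul hdwb))).mul
        ((hWd.pow 2).inv (pow_ne_zero 2 hW)))
  have := hA.add hB
  simpa only [R2f, div_eq_mul_inv, Pi.add_def] using this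


section Main

variable {x : ℝ → Fin 3 → ℝ}

lemma hJE3 (hx : SmoothCurve x) (t : ℝ) :
    HasDerivAt (fun s => ((dk 1 x s, dk 2 x s, dk 3 x s) : E3))
      ((dk 2 x t, dk 3 x t, dk 4 x t) : E3) t :=
  ((hasDerivAt_pi.mpr fun j => hD hx 1 j t).prodMk
    ((hasDerivAt_pi.mpr fun j => hD hx 2 j t).prodMk (hasDerivAt_pi.mpr fun j => hD hx 3 j t)))

lemma EL_red (hx : SmoothCurve x) (hw : ∀ s, cross (dk 1 x s) (dk 2 x s) ≠ 0)
    (t : ℝ) (i : Fin 3) :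
    EL Lcg x t i =
      - deriv (fun s => F1 (dk 1 x s) (dk 2 x s) (dk 3 x s) i) t
      + deriv (fun s => R2f (dk 1 x s) (dk 2 x s) (dk 3 x s) i) t := by
  have h0 : pd0 Lcg (jet x t) i = 0 := pd0_eq (hw t) i
  have h1 : (fun s => pd1 Lcg (jet x s) i)
      = fun s => F1 (dk 1 x s) (dk 2 x s) (dk 3 x s) i :=
    funext fun s => pd1_eq (hw s) i
  have h2 : (fun s => pd2 Lcg (jet x s) i)
      = fun s => Psi (dk 1 x s) (dk 2 x s) i + Rf (dk 1 x s) (dk 2 x s) (dk 3 x s) i :=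
    funext fun s => (pd2_eq (hw s) i).trans (keyIdent (hw s) i)
  have h3 : (fun s => pd3 Lcg (jet x s) i)
      = fun s => F3 (dk 1 x s) (dk 2 x s) i :=
    funext fun s => pd3_eq (hw s) i
  have hd3 : deriv (fun s => F3 (dk 1 x s) (dk 2 x s) i)
      = fun s => Rf (dk 1 x s) (dk 2 x s) (dk 3 x s) i :=
    funext fun s => (hG3 hx s (hw s) i).deriv
  have hRsm := hRfSmooth hx hw i
  have hGRdiff : ∀ s, DifferentiableAt ℝ
      (fun r => Rf (dk 1 x r) (dk 2 x r) (dk 3 x r) i) s :=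
    fun s => (hRsm.differentiable (by norm_num)) s
  have hder1 : deriv (fun s => Psi (dk 1 x s) (dk 2 x s) i +
        Rf (dk 1 x s) (dk 2 x s) (dk 3 x s) i)
      = fun s => R2f (dk 1 x s) (dk 2 x s) (dk 3 x s) i +
        deriv (fun r => Rf (dk 1 x r) (dk 2 x r) (dk 3 x r) i) s :=
    funext fun s => ((hGPsi hx s (hw s) i).add (hGRdiff s).hasDerivAt).deriv
  have hR2t : DifferentiableAt ℝ (fun s => R2f (dk 1 x s) (dk 2 x s) (dk 3 x s) i) t := by
    have hd := (diffR2fE (dk 1 x t, dk 2 x t, dk 3 x t) (hw t) i).hasFDerivAt.comp_hasDerivAt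
      t (hJE3 hx t)
    exact hd.differentiableAt
  have hdRf : DifferentiableAt ℝ (deriv (fun r => Rf (dk 1 x r) (dk 2 x r) (dk 3 x r) i)) t :=
    ((contDiff_infty_iff_deriv.mp hRsm).2.differentiable (by norm_num)) t
  have e3 : iteratedDeriv 3 (fun s => F3 (dk 1 x s) (dk 2 x s) i) t
      = deriv (deriv (fun r => Rf (dk 1 x r) (dk 2 x r) (dk 3 x r) i)) t := by
    rw [show (3:ℕ) = 2 + 1 from rfl, iteratedDeriv_succ', hd3,
      show (2:ℕ) = 1 + 1 from rfl, iteratedDeriv_succ, iteratedDeriv_one]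
  have e2 : iteratedDeriv 2 (fun s => Psi (dk 1 x s) (dk 2 x s) i +
        Rf (dk 1 x s) (dk 2 x s) (dk 3 x s) i) t
      = deriv (fun s => R2f (dk 1 x s) (dk 2 x s) (dk 3 x s) i) t
        + deriv (deriv (fun r => Rf (dk 1 x r) (dk 2 x r) (dk 3 x r) i)) t := by
    rw [show (2:ℕ) = 1 + 1 from rfl, iteratedDeriv_succ, iteratedDeriv_one, hder1]
    exact deriv_add hR2t hdRf
  rw [EL, h0, h1, h2, h3, e2, e3]
  ring

end Main


set_option maxHeartbeats 1000000

/-- for `L = |u|·det(u,a,b)/|u×a|²` the mixed partials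
`∂²L/∂ẍ^i∂x⃛^j` are symmetric in `i,j` (where `u×a ≠ 0`), and consequently the
Euler–Lagrange expression of `L` has order at most 4. -/
theorem flat_lagrangian_mixed_symmetric :
    (∀ q : Jet3, cross q.2.1 q.2.2.1 ≠ 0 →
      ∀ i j, mixed Lcg q i j = mixed Lcg q j i) ∧
    (∀ x y : ℝ → Fin 3 → ℝ, SmoothCurve x → SmoothCurve y →
      (∀ t, cross (dk 1 x t) (dk 2 x t) ≠ 0) →
      (∀ t, cross (dk 1 y t) (dk 2 y t) ≠ 0) →
      ∀ t : ℝ, (∀ m : ℕ, m ≤ 4 → dk m x t = dk m y t) →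
        ∀ i, EL Lcg x t i = EL Lcg y t i) := by
  constructor
  · exact part1
  · intro x y hx hy hwx hwy t hm i
    have e1 : dk 1 x t = dk 1 y t := hm 1 (by norm_num)
    have e2 : dk 2 x t = dk 2 y t := hm 2 (by norm_num)
    have e3 : dk 3 x t = dk 3 y t := hm 3 (by norm_num)
    have e4 : dk 4 x t = dk 4 y t := hm 4 (by norm_num)
    have key : ∀ F : E3 → ℝ,
        DifferentiableAt ℝ F ((dk 1 x t, dk 2 x t, dk 3 x t) : E3) →
        DifferentiableAt ℝ F ((dk 1 y t, dk 2 y t, dk 3 y t) : E3) →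
        deriv (fun s => F ((dk 1 x s, dk 2 x s, dk 3 x s) : E3)) t
          = deriv (fun s => F ((dk 1 y s, dk 2 y s, dk 3 y s) : E3)) t := by
      intro F hFx hFy
      have hdx := hFx.hasFDerivAt.comp_hasDerivAt t (hJE3 hx t)
      have hdy := hFy.hasFDerivAt.comp_hasDerivAt t (hJE3 hy t)
      rw [← e1, ← e2, ← e3, ← e4] at hdy
      have hfx : (fun s => F ((dk 1 x s, dk 2 x s, dk 3 x s) : E3))
          = F ∘ (fun s => ((dk 1 x s, dk 2 x s, dk 3 x s) : E3)) := rfl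
      have hfy : (fun s => F ((dk 1 y s, dk 2 y s, dk 3 y s) : E3))
          = F ∘ (fun s => ((dk 1 y s, dk 2 y s, dk 3 y s) : E3)) := rfl
      rw [hfx, hfy, hdx.deriv, hdy.deriv]
    rw [EL_red hx hwx t i, EL_red hy hwy t i,
      show (fun s => F1 (dk 1 x s) (dk 2 x s) (dk 3 x s) i)
        = (fun s => (fun q : E3 => F1 q.1 q.2.1 q.2.2 i)
            ((dk 1 x s, dk 2 x s, dk 3 x s) : E3)) from rfl,
      show (fun s => F1 (dk 1 y s) (dk 2 y s) (dk 3 y s) i)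
        = (fun s => (fun q : E3 => F1 q.1 q.2.1 q.2.2 i)
            ((dk 1 y s, dk 2 y s, dk 3 y s) : E3)) from rfl,
      show (fun s => R2f (dk 1 x s) (dk 2 x s) (dk 3 x s) i)
        = (fun s => (fun q : E3 => R2f q.1 q.2.1 q.2.2 i)
            ((dk 1 x s, dk 2 x s, dk 3 x s) : E3)) from rfl,
      show (fun s => R2f (dk 1 y s) (dk 2 y s) (dk 3 y s) i)
        = (fun s => (fun q : E3 => R2f q.1 q.2.1 q.2.2 i)
            ((dk 1 y s, dk 2 y s, dk 3 y s) : E3)) from rfl,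
      key _ (diffF1E (dk 1 x t, dk 2 x t, dk 3 x t) (hwx t) i)
        (diffF1E (dk 1 y t, dk 2 y t, dk 3 y t) (hwy t) i),
      key _ (diffR2fE (dk 1 x t, dk 2 x t, dk 3 x t) (hwx t) i)
        (diffR2fE (dk 1 y t, dk 2 y t, dk 3 y t) (hwy t) i)]
end
end

section
/- The second-order Lagrangian L'(ẋ,ẍ) = ẋ₁(ẋ₂ẍ₃ − ẋ₃ẍ₂) / ((ẋ₂² + ẋ₃²)·√(ẋ₁² + ẋ₂² + ẋ₃²)) on curves in ℝ³ differs from L = |ẋ|·det(ẋ,ẍ,x⃛)/|ẋ×ẍ|² by the total time derivative of the function arctan[(ẍ₁|ẋ|² − ⟨ẋ,ẍ⟩ẋ₁)/((ẋ₂ẍ₃ − ẋ₃ẍ₂)|ẋ|)], on the open set where all denominators are nonzero. -/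
open scoped BigOperators

noncomputable section

/-- Third-order Lagrangian `L = |ẋ|·det(ẋ,ẍ,x⃛)/|ẋ×ẍ|²` along a curve. -/
def Lfull (x : ℝ → Fin 3 → ℝ) (t : ℝ) : ℝ :=
  Real.sqrt (dot (dk 1 x t) (dk 1 x t)) * dot (cross (dk 1 x t) (dk 2 x t)) (dk 3 x t) /
    dot (cross (dk 1 x t) (dk 2 x t)) (cross (dk 1 x t) (dk 2 x t))

/-- Second-order Lagrangian
`L' = ẋ₁(ẋ₂ẍ₃ − ẋ₃ẍ₂)/((ẋ₂² + ẋ₃²)√(ẋ₁² + ẋ₂² + ẋ₃²))` (indices `0,1,2` here). -/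
def Lred (v w : Fin 3 → ℝ) : ℝ :=
  v 0 * (v 1 * w 2 - v 2 * w 1) /
    ((v 1 ^ 2 + v 2 ^ 2) * Real.sqrt (v 0 ^ 2 + v 1 ^ 2 + v 2 ^ 2))

/-- The generating function `arctan[(ẍ₁|ẋ|² − ⟨ẋ,ẍ⟩ẋ₁)/((ẋ₂ẍ₃ − ẋ₃ẍ₂)|ẋ|)]`. -/
def genfun (v w : Fin 3 → ℝ) : ℝ :=
  Real.arctan ((w 0 * dot v v - dot v w * v 0) /
    ((v 1 * w 2 - v 2 * w 1) * Real.sqrt (dot v v)))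

set_option maxHeartbeats 1000000

private lemma eBgen (a0 b0 N Nd c s B Z : ℝ) (hs0 : s ≠ 0) (ha0 : a0 ≠ 0)
    (hB : B = a0^2*s^2 + N^2) (hZ : Z = s^2*(Nd*a0 - N*b0) - N*a0*c) :
    1 / (1 + (N / (a0 * s)) ^ 2) *
      ((Nd * (a0 * s) - N * (b0 * s + a0 * (2 * c / (2 * s)))) / (a0 * s) ^ 2)
    = Z / (s * B) := by
  have hB0 : B ≠ 0 := by
    rw [hB]
    have h5 : 0 < (a0*s)^2 := lt_of_le_of_ne (sq_nonneg _)
      (Ne.symm (pow_ne_zero 2 (mul_ne_zero ha0 hs0)))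
    nlinarith [sq_nonneg N]
  subst hB hZ
  field_simp
  ring


/-- on the open set where all denominators are nonzero,
`L' = L − d/dt arctan[...]`, i.e. the two Lagrangians differ by a total derivative. -/
theorem second_order_lagrangian_total_derivative
    (x : ℝ → Fin 3 → ℝ) (hx : ∀ i, ContDiff ℝ (⊤ : ℕ∞) fun t => x t i)
    (h1 : ∀ t, dk 1 x t ≠ 0)
    (h2 : ∀ t, cross (dk 1 x t) (dk 2 x t) ≠ 0)
    (h3 : ∀ t, (dk 1 x t 1) ^ 2 + (dk 1 x t 2) ^ 2 ≠ 0)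
    (h4 : ∀ t, dk 1 x t 1 * dk 2 x t 2 - dk 1 x t 2 * dk 2 x t 1 ≠ 0) :
    ∀ t, Lred (dk 1 x t) (dk 2 x t)
      = Lfull x t - deriv (fun s => genfun (dk 1 x s) (dk 2 x s)) t := by
  intro t
  have hd : ∀ (k : ℕ) (i : Fin 3), HasDerivAt (fun τ => dk k x τ i) (dk (k+1) x t i) t := by
    intro k i
    have h1' : Differentiable ℝ (iteratedDeriv k fun s => x s i) :=
      (hx i).differentiable_iteratedDeriv k (by exact_mod_cast WithTop.coe_lt_top _)
    simpa [dk, iteratedDeriv_succ] using (h1' t).hasDerivAt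
  set v0 := dk 1 x t 0 with hv0
  set v1 := dk 1 x t 1 with hv1
  set v2 := dk 1 x t 2 with hv2
  set w0 := dk 2 x t 0 with hw0
  set w1 := dk 2 x t 1 with hw1
  set w2 := dk 2 x t 2 with hw2
  set u0 := dk 3 x t 0 with hu0
  set u1 := dk 3 x t 1 with hu1
  set u2 := dk 3 x t 2 with hu2
  -- basic positivity facts
  have hPpos : (0:ℝ) < v1^2 + v2^2 := lt_of_le_of_ne (by positivity) (Ne.symm (h3 t))
  have hQpos : (0:ℝ) < v0*v0 + v1*v1 + v2*v2 := by nlinarith [sq_nonneg v0]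
  have ha0 : v1*w2 - v2*w1 ≠ 0 := h4 t
  set s := Real.sqrt (v0*v0 + v1*v1 + v2*v2) with hsdef
  have hspos : 0 < s := Real.sqrt_pos.mpr hQpos
  have hs0 : s ≠ 0 := ne_of_gt hspos
  have hs2 : s^2 = v0*v0 + v1*v1 + v2*v2 := Real.sq_sqrt hQpos.le
  -- derivatives of the building blocks
  have hq : HasDerivAt (fun τ => dk 1 x τ 0 * dk 1 x τ 0 + dk 1 x τ 1 * dk 1 x τ 1
      + dk 1 x τ 2 * dk 1 x τ 2) (2*(v0*w0 + v1*w1 + v2*w2)) t := by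
    have h := (((hd 1 0).mul (hd 1 0)).add ((hd 1 1).mul (hd 1 1))).add ((hd 1 2).mul (hd 1 2))
    exact h.congr_deriv (by ring)
  have hc : HasDerivAt (fun τ => dk 1 x τ 0 * dk 2 x τ 0 + dk 1 x τ 1 * dk 2 x τ 1
      + dk 1 x τ 2 * dk 2 x τ 2) ((w0*w0 + w1*w1 + w2*w2) + (v0*u0 + v1*u1 + v2*u2)) t := by
    have h := (((hd 1 0).mul (hd 2 0)).add ((hd 1 1).mul (hd 2 1))).add ((hd 1 2).mul (hd 2 2))
    exact h.congr_deriv (by ring)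
  have hN : HasDerivAt (fun τ => dk 2 x τ 0 * (dk 1 x τ 0 * dk 1 x τ 0 + dk 1 x τ 1 * dk 1 x τ 1
        + dk 1 x τ 2 * dk 1 x τ 2)
      - (dk 1 x τ 0 * dk 2 x τ 0 + dk 1 x τ 1 * dk 2 x τ 1 + dk 1 x τ 2 * dk 2 x τ 2) * dk 1 x τ 0)
      (u0*(v0*v0+v1*v1+v2*v2) + (v0*w0+v1*w1+v2*w2)*w0
        - ((w0*w0+w1*w1+w2*w2) + (v0*u0+v1*u1+v2*u2))*v0) t := by
    have h := ((hd 2 0).mul hq).sub (hc.mul (hd 1 0))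
    exact h.congr_deriv (by ring)
  have hsq : HasDerivAt (fun τ => Real.sqrt (dk 1 x τ 0 * dk 1 x τ 0 + dk 1 x τ 1 * dk 1 x τ 1
      + dk 1 x τ 2 * dk 1 x τ 2)) (2*(v0*w0 + v1*w1 + v2*w2) / (2*s)) t :=
    hq.sqrt (ne_of_gt hQpos)
  have ha : HasDerivAt (fun τ => dk 1 x τ 1 * dk 2 x τ 2 - dk 1 x τ 2 * dk 2 x τ 1)
      (v1*u2 - v2*u1) t := by
    have h := ((hd 1 1).mul (hd 2 2)).sub ((hd 1 2).mul (hd 2 1))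
    exact h.congr_deriv (by ring)
  have hD : HasDerivAt (fun τ => (dk 1 x τ 1 * dk 2 x τ 2 - dk 1 x τ 2 * dk 2 x τ 1) *
      Real.sqrt (dk 1 x τ 0 * dk 1 x τ 0 + dk 1 x τ 1 * dk 1 x τ 1 + dk 1 x τ 2 * dk 1 x τ 2))
      ((v1*u2 - v2*u1) * s + (v1*w2 - v2*w1) * (2*(v0*w0 + v1*w1 + v2*w2) / (2*s))) t :=
    ha.mul hsq
  have hD0 : (v1*w2 - v2*w1) * s ≠ 0 := mul_ne_zero ha0 hs0
  have hfrac := hN.div hD hD0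
  have harc := hfrac.arctan
  simp only [Pi.div_apply] at harc
  have hfun : (fun τ => genfun (dk 1 x τ) (dk 2 x τ)) = fun τ => Real.arctan
      ((dk 2 x τ 0 * (dk 1 x τ 0 * dk 1 x τ 0 + dk 1 x τ 1 * dk 1 x τ 1 + dk 1 x τ 2 * dk 1 x τ 2)
        - (dk 1 x τ 0 * dk 2 x τ 0 + dk 1 x τ 1 * dk 2 x τ 1 + dk 1 x τ 2 * dk 2 x τ 2) * dk 1 x τ 0)
       / ((dk 1 x τ 1 * dk 2 x τ 2 - dk 1 x τ 2 * dk 2 x τ 1) *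
          Real.sqrt (dk 1 x τ 0 * dk 1 x τ 0 + dk 1 x τ 1 * dk 1 x τ 1 + dk 1 x τ 2 * dk 1 x τ 2))) := by
    funext τ
    simp only [genfun, dot, Fin.sum_univ_three]
  rw [hfun, harc.deriv]
  simp only [Lred, Lfull, dot, cross, Fin.sum_univ_three, Matrix.cons_val_zero,
    Matrix.cons_val_one, Matrix.head_cons, Matrix.cons_val_two, Matrix.tail_cons]
  simp only [← hv0, ← hv1, ← hv2, ← hw0, ← hw1, ← hw2, ← hu0, ← hu1, ← hu2]
  rw [show v0^2+v1^2+v2^2 = v0*v0+v1*v1+v2*v2 from by ring]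
  simp only [← hsdef]
  -- abbreviations (textual): Q, N, Nd, a0, b0, c, A, B, Z
  have hQ : v0*v0+v1*v1+v2*v2 = v0*v0+v1*v1+v2*v2 := rfl
  have hB0 : (0:ℝ) < (v1*w2-v2*w1)^2*(v0*v0+v1*v1+v2*v2) +
      (w0*(v0*v0+v1*v1+v2*v2) - (v0*w0+v1*w1+v2*w2)*v0)^2 := by
    nlinarith [mul_pos (mul_self_pos.mpr ha0) hQpos,
      sq_nonneg (w0*(v0*v0+v1*v1+v2*v2) - (v0*w0+v1*w1+v2*w2)*v0)]
  have hApos : (0:ℝ) < (v1*w2-v2*w1)*(v1*w2-v2*w1) + (v2*w0-v0*w2)*(v2*w0-v0*w2) +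
      (v0*w1-v1*w0)*(v0*w1-v1*w0) := by
    nlinarith [mul_self_pos.mpr ha0, mul_self_nonneg (v2*w0-v0*w2), mul_self_nonneg (v0*w1-v1*w0)]
  have eB : 1 /
          (1 +
            ((w0 * (v0 * v0 + v1 * v1 + v2 * v2) - (v0 * w0 + v1 * w1 + v2 * w2) * v0) /
                ((v1 * w2 - v2 * w1) * s)) ^ 2) *
        (((u0 * (v0 * v0 + v1 * v1 + v2 * v2) + (v0 * w0 + v1 * w1 + v2 * w2) * w0 -
                (w0 * w0 + w1 * w1 + w2 * w2 + (v0 * u0 + v1 * u1 + v2 * u2)) * v0) *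
              ((v1 * w2 - v2 * w1) * s) -
            (w0 * (v0 * v0 + v1 * v1 + v2 * v2) - (v0 * w0 + v1 * w1 + v2 * w2) * v0) *
              ((v1 * u2 - v2 * u1) * s +
                (v1 * w2 - v2 * w1) * (2 * (v0 * w0 + v1 * w1 + v2 * w2) / (2 * s)))) /
          ((v1 * w2 - v2 * w1) * s) ^ 2)
      = ((v0*v0+v1*v1+v2*v2) *
          ((u0*(v0*v0+v1*v1+v2*v2) + (v0*w0+v1*w1+v2*w2)*w0
             - ((w0*w0+w1*w1+w2*w2) + (v0*u0+v1*u1+v2*u2))*v0) * (v1*w2-v2*w1)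
           - (w0*(v0*v0+v1*v1+v2*v2) - (v0*w0+v1*w1+v2*w2)*v0) * (v1*u2-v2*u1))
         - (w0*(v0*v0+v1*v1+v2*v2) - (v0*w0+v1*w1+v2*w2)*v0) * (v1*w2-v2*w1) *
             (v0*w0+v1*w1+v2*w2))
        / (s * ((v1*w2-v2*w1)^2*(v0*v0+v1*v1+v2*v2) +
           (w0*(v0*v0+v1*v1+v2*v2) - (v0*w0+v1*w1+v2*w2)*v0)^2)) := by
    exact eBgen (v1*w2-v2*w1) (v1*u2-v2*u1)
      (w0*(v0*v0+v1*v1+v2*v2) - (v0*w0+v1*w1+v2*w2)*v0)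
      (u0*(v0*v0+v1*v1+v2*v2) + (v0*w0+v1*w1+v2*w2)*w0
        - ((w0*w0+w1*w1+w2*w2) + (v0*u0+v1*u1+v2*u2))*v0)
      (v0*w0+v1*w1+v2*w2) s _ _ hs0 ha0 (by rw [hs2]) (by rw [hs2])
  rw [eB]
  apply mul_left_cancel₀ hs0
  conv_rhs => rw [mul_sub]
  rw [show s * (v0 * (v1 * w2 - v2 * w1) / ((v1 ^ 2 + v2 ^ 2) * s))
      = v0 * (v1 * w2 - v2 * w1) / (v1 ^ 2 + v2 ^ 2) from by
    field_simp]
  rw [show s * (s * ((v1 * w2 - v2 * w1) * u0 + (v2 * w0 - v0 * w2) * u1 + (v0 * w1 - v1 * w0) * u2) /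
        ((v1 * w2 - v2 * w1) * (v1 * w2 - v2 * w1) + (v2 * w0 - v0 * w2) * (v2 * w0 - v0 * w2) +
          (v0 * w1 - v1 * w0) * (v0 * w1 - v1 * w0)))
      = (v0*v0+v1*v1+v2*v2) * ((v1 * w2 - v2 * w1) * u0 + (v2 * w0 - v0 * w2) * u1 + (v0 * w1 - v1 * w0) * u2) /
        ((v1 * w2 - v2 * w1) * (v1 * w2 - v2 * w1) + (v2 * w0 - v0 * w2) * (v2 * w0 - v0 * w2) +
          (v0 * w1 - v1 * w0) * (v0 * w1 - v1 * w0)) from by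
    rw [← hs2]; field_simp]
  rw [show s * (((v0*v0+v1*v1+v2*v2) *
          ((u0*(v0*v0+v1*v1+v2*v2) + (v0*w0+v1*w1+v2*w2)*w0
             - ((w0*w0+w1*w1+w2*w2) + (v0*u0+v1*u1+v2*u2))*v0) * (v1*w2-v2*w1)
           - (w0*(v0*v0+v1*v1+v2*v2) - (v0*w0+v1*w1+v2*w2)*v0) * (v1*u2-v2*u1))
         - (w0*(v0*v0+v1*v1+v2*v2) - (v0*w0+v1*w1+v2*w2)*v0) * (v1*w2-v2*w1) *
             (v0*w0+v1*w1+v2*w2))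
        / (s * ((v1*w2-v2*w1)^2*(v0*v0+v1*v1+v2*v2) +
           (w0*(v0*v0+v1*v1+v2*v2) - (v0*w0+v1*w1+v2*w2)*v0)^2)))
      = ((v0*v0+v1*v1+v2*v2) *
          ((u0*(v0*v0+v1*v1+v2*v2) + (v0*w0+v1*w1+v2*w2)*w0
             - ((w0*w0+w1*w1+w2*w2) + (v0*u0+v1*u1+v2*u2))*v0) * (v1*w2-v2*w1)
           - (w0*(v0*v0+v1*v1+v2*v2) - (v0*w0+v1*w1+v2*w2)*v0) * (v1*u2-v2*u1))
         - (w0*(v0*v0+v1*v1+v2*v2) - (v0*w0+v1*w1+v2*w2)*v0) * (v1*w2-v2*w1) *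
             (v0*w0+v1*w1+v2*w2))
        / ((v1*w2-v2*w1)^2*(v0*v0+v1*v1+v2*v2) +
           (w0*(v0*v0+v1*v1+v2*v2) - (v0*w0+v1*w1+v2*w2)*v0)^2) from by
    rw [eq_div_iff (ne_of_gt hB0)]
    rw [mul_div_assoc', div_mul_eq_mul_div, div_eq_iff (mul_ne_zero hs0 (ne_of_gt hB0))]
    ring]
  have hP0 : (v1:ℝ)^2 + v2^2 ≠ 0 := ne_of_gt hPpos
  have hB1 : (v1 * w2 - v2 * w1) ^ 2 * (v0 ^ 2 + v1 ^ 2 + v2 ^ 2) +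
      ((v0 ^ 2 + v1 ^ 2 + v2 ^ 2) * w0 - v0 * (v0 * w0 + v1 * w1 + w2 * v2)) ^ 2 ≠ 0 :=
    ne_of_gt (lt_of_lt_of_eq hB0 (by ring))
  field_simp
  ring
end
end
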